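/- arXiv:quant-ph/0607092 — 2 statements merged into one kernel-verified Lean document; each statement's English description precedes it below -/
import Mathlib

section
/- Let m ≥ 1 and r, t ∈ ℂ. For every n ≥ 1 and every tuple (a_1,…,a_n) ∈ (Fin m)^n, the operator product P_{a_1}·G_{r,t} · P_{a_2}·G_{r,t} ⋯ P_{a_n}·G_{r,t} equals Ξ(a_1,…,a_n) · ((r − t)·|a_1⟩⟨a_n| + t·√m·|a_1⟩⟨s|), where Ξ(a_1,…,a_n) = ∏_{j=1}^{n−1} (t + (r − t)·δ_{a_j,a_{j+1}}) (the empty product for n = 1 is 1). -/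
noncomputable section

open scoped BigOperators

/-- The complex Euclidean space `ℂ^m`. -/
abbrev H (m : ℕ) := EuclideanSpace ℂ (Fin m)

/-- The computational orthonormal basis vector `|a⟩`. -/
def ket {m : ℕ} (a : Fin m) : H m := EuclideanSpace.single a 1

/-- The uniform superposition `|s⟩ = (1/√m) Σ_a |a⟩`. -/
def ketS (m : ℕ) : H m := ((Real.sqrt m : ℂ))⁻¹ • ∑ a : Fin m, ket a

/-- The outer product `|x⟩⟨y|`, i.e. `v ↦ ⟪y, v⟫ • x`. -/
def outer {m : ℕ} (x y : H m) : H m →L[ℂ] H m := (innerSL ℂ y).smulRight x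

/-- The projection `P_a = |a⟩⟨a|`. -/
def P {m : ℕ} (a : Fin m) : H m →L[ℂ] H m := outer (ket a) (ket a)

/-- The generalized Grover coin `G_{r,t} = (r - t)·I + t·m·|s⟩⟨s|`. -/
def grover (m : ℕ) (r t : ℂ) : H m →L[ℂ] H m :=
  (r - t) • 1 + (t * m) • outer (ketS m) (ketS m)

/-- `Ξ(a_1, …, a_n) = ∏_{j=1}^{n-1} (t + (r - t) δ_{a_j, a_{j+1}})` (empty product is 1). -/
def Xi (m n : ℕ) (r t : ℂ) (a : Fin n → Fin m) : ℂ :=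
  ∏ j : Fin n, if h : (j : ℕ) + 1 < n then
    (t + (r - t) * (if a j = a ⟨(j : ℕ) + 1, h⟩ then 1 else 0)) else 1

/-!
Each factor `P_a G` is the rank-one operator `|a⟩⟨a| G`, so in a product of such factors the
inner pieces `⟨a_j| G |a_{j+1}⟩` collapse to scalars and the product becomes
`(∏_j ⟨a_j| G |a_{j+1}⟩) |a_1⟩⟨a_n| G`. For the Grover coin, `⟨a| G |b⟩ = t + (r - t) δ_{a,b}`
(as `⟨a|s⟩⟨s|b⟩ = 1/m`), and `|a_1⟩⟨a_n| G = (r - t) |a_1⟩⟨a_n| + t √m |a_1⟩⟨s|`.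
-/

lemma outer_apply {m : ℕ} (x y v : H m) : outer x y v = inner ℂ y v • x := rfl

lemma outer_mul_outer {m : ℕ} (x y u v : H m) :
    outer x y * outer u v = inner ℂ y u • outer x v := by
  ext w
  simp only [mul_apply_eq_comp, outer_apply, FunLike.coe_smul, Pi.smul_apply,
    inner_smul_right, smul_smul, mul_comm]

lemma outer_mul_outer_mul {m : ℕ} (x y u v : H m) (A : H m →L[ℂ] H m) :
    outer x y * A * (outer u v * A) = inner ℂ y (A u) • (outer x v * A) := by
  ext w
  simp only [mul_apply_eq_comp, outer_apply, FunLike.coe_smul, Pi.smul_apply,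
    map_smul, smul_smul, mul_comm]

lemma prod_outer_self_mul {m n : ℕ} (x : Fin (n + 1) → H m) (A : H m →L[ℂ] H m) :
    (List.ofFn fun j => outer (x j) (x j) * A).prod
      = (∏ j : Fin n, inner ℂ (x j.castSucc) (A (x j.succ))) •
          (outer (x 0) (x (Fin.last n)) * A) := by
  induction n with
  | zero => simp
  | succ n ih =>
    rw [List.ofFn_succ, List.prod_cons, ih (fun j => x j.succ), mul_smul_comm,
      outer_mul_outer_mul, smul_comm, smul_smul, Fin.prod_univ_succ]
    simp only [Fin.succ_last, Fin.castSucc_zero, Fin.succ_zero_eq_one, Fin.succ_castSucc]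

lemma Xi_succ_eq_prod (m n : ℕ) (r t : ℂ) (a : Fin (n + 1) → Fin m) :
    Xi m (n + 1) r t a
      = ∏ j : Fin n, (t + (r - t) * if a j.castSucc = a j.succ then 1 else 0) := by
  rw [Xi, Fin.prod_univ_castSucc, dif_neg (by simp), mul_one]
  refine Finset.prod_congr rfl fun j _ => ?_
  rw [dif_pos (by simp)]
  rfl

lemma inner_ket_ket {m : ℕ} (a b : Fin m) :
    inner ℂ (ket a) (ket b) = if a = b then 1 else 0 := by
  simp [ket, EuclideanSpace.inner_single_left]

lemma inner_ketS_ket {m : ℕ} (b : Fin m) : inner ℂ (ketS m) (ket b) = ((Real.sqrt m : ℂ))⁻¹ := by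
  simp only [ketS, inner_smul_left, sum_inner, inner_ket_ket]
  simp

lemma inner_ket_ketS {m : ℕ} (b : Fin m) : inner ℂ (ket b) (ketS m) = ((Real.sqrt m : ℂ))⁻¹ := by
  simp only [ketS, inner_smul_right, inner_sum, inner_ket_ket]
  simp

lemma inner_ket_grover_ket {m : ℕ} (r t : ℂ) (a b : Fin m) :
    inner ℂ (ket a) (grover m r t (ket b)) = t + (r - t) * if a = b then 1 else 0 := by
  have hm : (Real.sqrt m : ℂ) ≠ 0 := by
    have : 0 < m := Fin.pos a
    norm_cast
    positivity
  have hsq : (Real.sqrt m : ℂ) * Real.sqrt m = m := by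
    exact_mod_cast Real.mul_self_sqrt (Nat.cast_nonneg m)
  simp only [grover, add_apply, FunLike.coe_smul, Pi.smul_apply,
    one_apply_eq_self, outer_apply, inner_add_right, inner_smul_right,
    inner_ket_ket, inner_ketS_ket, inner_ket_ketS, ← hsq]
  field_simp
  ring

lemma outer_ket_mul_grover {m : ℕ} (r t : ℂ) (x : H m) (b : Fin m) :
    outer x (ket b) * grover m r t
      = (r - t) • outer x (ket b) + (t * (Real.sqrt m : ℂ)) • outer x (ketS m) := by
  rw [grover, mul_add, mul_smul_comm, mul_smul_comm, mul_one, outer_mul_outer, inner_ket_ketS,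
    smul_smul, mul_assoc, ← div_eq_mul_inv, ← Complex.ofReal_natCast, ← Complex.ofReal_div,
    Real.div_sqrt]

/-- For every tuple `(a_1, …, a_n)`,
`P_{a_1} G_{r,t} ⋯ P_{a_n} G_{r,t} = Ξ(a) ((r - t)|a_1⟩⟨a_n| + t√m |a_1⟩⟨s|)`. -/
theorem grover_general_proj_prod (m : ℕ) (r t : ℂ)
    (n : ℕ) (hn : 1 ≤ n) (a : Fin n → Fin m) :
    (List.ofFn (fun j : Fin n => P (a j) * grover m r t)).prod
      = Xi m n r t a •
          ((r - t) • outer (ket (a ⟨0, by omega⟩)) (ket (a ⟨n - 1, by omega⟩))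
            + (t * (Real.sqrt m : ℂ)) • outer (ket (a ⟨0, by omega⟩)) (ketS m)) := by
  obtain ⟨k, rfl⟩ : ∃ k, n = k + 1 := ⟨n - 1, by omega⟩
  have hlast : (⟨k + 1 - 1, by omega⟩ : Fin (k + 1)) = Fin.last k := Fin.ext (by simp)
  have hprod := prod_outer_self_mul (fun j => ket (a j)) (grover m r t)
  simp only [inner_ket_grover_ket] at hprod
  rw [outer_ket_mul_grover] at hprod
  rw [Xi_succ_eq_prod, hlast, Fin.mk_zero]
  exact hprod
end
end

section
/- Let d ≥ 2, m = 2d, and r, t ∈ ℂ with t ≠ 0 satisfy the unitarity constraints |r|² + (m−1)|t|² = 1 and (m−2)|t|² + conj(r)·t + r·conj(t) = 0, and set ρ = |r|² − |t|². Then the dispersion 𝒟(n) = K·Σ_{a∈(Fin m)^n} ‖e(a_1)+⋯+e(a_n)‖²·|Ξ(a)|² of the quantum walk with random phase shifts grows linearly with slope (1+ρ)/(1−ρ), up to an exponentially small correction: there exist constants c ∈ ℝ and C ≥ 0 such that for all n ≥ 1, |𝒟(n) − ((1+ρ)/(1−ρ))·n − c| ≤ C·|ρ|^n. -/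
/-!
`‖Ξ(a)‖² = ∏ⱼ w(aⱼ, aⱼ₊₁)` with `w(x, y) = |r|²` if `x = y` and `|t|²` otherwise. The first
unitarity constraint makes `w` stochastic, so the step directions `e(aⱼ)` form a Markov chain and
`𝒟(n)/K` is `m` times the mean squared displacement of the resulting persistent random walk.
Since `∑ e = 0`, one step of the chain multiplies the expected direction by `ρ`; hence the
correlation `R(n)` of the displacement with the last step satisfies `R(n+1) = ρ R(n) + m`, and the
second moment `S(n) = 𝒟(n)/K` satisfies `S(n+1) = S(n) + 2ρ R(n) + m`. Solving,
`S(n) = m ((1+ρ)/(1-ρ) n - 2ρ (1-ρⁿ)/(1-ρ)²)`. The second constraint gives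
`K = |r + (m-1) t|² / m = 1/m`.
-/

noncomputable section

open scoped BigOperators ComplexConjugate RealInnerProductSpace

/-- The `2d` signed standard basis vectors of `ℝ^d`: `e(2k) = u_k`, `e(2k+1) = -u_k`. -/
def eR (d : ℕ) (a : Fin (2 * d)) : EuclideanSpace ℝ (Fin d) :=
  EuclideanSpace.single ⟨(a : ℕ) / 2, by have := a.2; omega⟩
    (if (a : ℕ) % 2 = 0 then 1 else -1)

/-- The normalization constant `K = |(r-t)/√m + √m t|²` with `m = 2d`. -/
def K (d : ℕ) (r t : ℂ) : ℝ :=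
  ‖(r - t) / (Real.sqrt (2 * d) : ℂ) + (Real.sqrt (2 * d) : ℂ) * t‖ ^ 2

/-- The dispersion `𝒟(n) = K Σ_a ‖e(a_1)+⋯+e(a_n)‖² |Ξ(a)|²` of the phase-averaged
quantum walk with random phase shifts. -/
def Dsp (d : ℕ) (r t : ℂ) (n : ℕ) : ℝ :=
  K d r t * ∑ a : Fin n → Fin (2 * d),
    ‖∑ j : Fin n, eR d (a j)‖ ^ 2 * ‖Xi (2 * d) n r t a‖ ^ 2

/-- The auxiliary sum `R(n) = Σ_a |Ξ(a)|² ⟨e(a_1)+⋯+e(a_n), e(a_n)⟩`. -/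
def Rsum (d : ℕ) (r t : ℂ) (n : ℕ) : ℝ :=
  if hn : 0 < n then
    ∑ a : Fin n → Fin (2 * d), ‖Xi (2 * d) n r t a‖ ^ 2 *
      ⟪(∑ j : Fin n, eR d (a j)), eR d (a ⟨n - 1, by omega⟩)⟫
  else 0

open Finset

section PathWeight

variable {ι : Type*} (p : ι → ι → ℝ)

def pathWeight {n : ℕ} (a : Fin (n + 1) → ι) : ℝ :=
  ∏ j : Fin n, p (a j.castSucc) (a j.succ)

@[simp]
lemma pathWeight_fin_one (a : Fin 1 → ι) : pathWeight p a = 1 := by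
  simp [pathWeight]

lemma pathWeight_snoc {n : ℕ} (a : Fin (n + 1) → ι) (b : ι) :
    pathWeight p (Fin.snoc a b : Fin (n + 2) → ι) = pathWeight p a * p (a (Fin.last n)) b := by
  simp only [pathWeight, Fin.prod_univ_castSucc, Fin.succ_castSucc, Fin.snoc_castSucc,
    Fin.succ_last, Fin.snoc_last]

lemma Fin.sum_univ_fun_snoc {M : Type*} [AddCommMonoid M] [Fintype ι] {n : ℕ}
    (f : (Fin (n + 1) → ι) → M) :
    ∑ a, f a = ∑ a : Fin n → ι, ∑ b, f (Fin.snoc a b) := by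
  rw [← (Fin.snocEquiv fun _ => ι).sum_comp, Fintype.sum_prod_type, Finset.sum_comm]
  rfl

variable [Fintype ι]

lemma sum_pathWeight_mul_succ {n : ℕ} (g : (Fin (n + 2) → ι) → ℝ) :
    ∑ a, pathWeight p a * g a =
      ∑ a : Fin (n + 1) → ι, pathWeight p a * ∑ b, p (a (Fin.last n)) b * g (Fin.snoc a b) := by
  simp_rw [Fin.sum_univ_fun_snoc (n := n + 1), pathWeight_snoc, mul_sum, mul_assoc]

end PathWeight

section CorrelatedWalk

variable {ι E : Type*} [Fintype ι] [NormedAddCommGroup E] [InnerProductSpace ℝ E]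
  (p : ι → ι → ℝ) (v : ι → E)

def lastStepCorrelation (n : ℕ) : ℝ :=
  ∑ a : Fin (n + 1) → ι, pathWeight p a * ⟪∑ j, v (a j), v (a (Fin.last n))⟫

def secondMoment (n : ℕ) : ℝ :=
  ∑ a : Fin (n + 1) → ι, pathWeight p a * ‖∑ j, v (a j)‖ ^ 2

variable {p v} {ρ : ℝ} (hp : ∀ x, ∑ y, p x y = 1) (hpv : ∀ x, ∑ y, p x y • v y = ρ • v x)
  (hv : ∀ x, ‖v x‖ = 1)
include hp

lemma sum_pathWeight (n : ℕ) : ∑ a : Fin (n + 1) → ι, pathWeight p a = Fintype.card ι := by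
  induction n with
  | zero => simp
  | succ n ih => rw [← ih]; simpa [hp] using sum_pathWeight_mul_succ p fun _ => 1

omit hp in
include hv in
lemma lastStepCorrelation_zero : lastStepCorrelation p v 0 = Fintype.card ι := by
  simp [lastStepCorrelation, hv]

omit hp [InnerProductSpace ℝ E] in
include hv in
lemma secondMoment_zero : secondMoment p v 0 = Fintype.card ι := by
  simp [secondMoment, hv]

omit hp in
include hpv in
lemma sum_mul_inner_eq (x : ι) (u : E) : ∑ y, p x y * ⟪u, v y⟫ = ρ * ⟪u, v x⟫ := by
  simp_rw [← inner_smul_right, ← inner_sum, hpv]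

include hpv hv

lemma lastStepCorrelation_succ (n : ℕ) :
    lastStepCorrelation p v (n + 1) = ρ * lastStepCorrelation p v n + Fintype.card ι := by
  have step (a : Fin (n + 1) → ι) :
      ∑ y, p (a (Fin.last n)) y * ⟪∑ j, v ((Fin.snoc a y : Fin (n + 2) → ι) j), v y⟫ =
        ρ * ⟪∑ j, v (a j), v (a (Fin.last n))⟫ + 1 := by
    simp only [Fin.sum_univ_castSucc (n := n + 1), Fin.snoc_castSucc, Fin.snoc_last,
      inner_add_left, real_inner_self_eq_norm_sq, hv, mul_add, sum_add_distrib,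
      sum_mul_inner_eq hpv]
    simp [hp]
  simp only [lastStepCorrelation, sum_pathWeight_mul_succ, Fin.snoc_last, step, mul_add,
    sum_add_distrib, mul_one, sum_pathWeight hp, mul_left_comm _ ρ, ← mul_sum]

lemma secondMoment_succ (n : ℕ) :
    secondMoment p v (n + 1) =
      secondMoment p v n + 2 * ρ * lastStepCorrelation p v n + Fintype.card ι := by
  have step (a : Fin (n + 1) → ι) :
      ∑ y, p (a (Fin.last n)) y * ‖∑ j, v ((Fin.snoc a y : Fin (n + 2) → ι) j)‖ ^ 2 =
        ‖∑ j, v (a j)‖ ^ 2 + 2 * ρ * ⟪∑ j, v (a j), v (a (Fin.last n))⟫ + 1 := by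
    simp only [Fin.sum_univ_castSucc (n := n + 1), Fin.snoc_castSucc, Fin.snoc_last,
      norm_add_sq_real, hv, mul_add, sum_add_distrib, mul_left_comm _ (2 : ℝ),
      ← mul_sum, sum_mul_inner_eq hpv]
    simp only [← sum_mul, hp, one_mul]
    ring
  simp only [secondMoment, lastStepCorrelation, sum_pathWeight_mul_succ, step, mul_add,
    sum_add_distrib, mul_one, sum_pathWeight hp, mul_left_comm _ (2 * ρ), ← mul_sum]

variable (hρ : ρ ≠ 1)
include hρ

lemma lastStepCorrelation_eq (n : ℕ) :
    lastStepCorrelation p v n = Fintype.card ι * (1 - ρ ^ (n + 1)) / (1 - ρ) := by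
  have : 1 - ρ ≠ 0 := sub_ne_zero.mpr hρ.symm
  induction n with
  | zero => rw [lastStepCorrelation_zero hv, zero_add, pow_one, mul_div_cancel_right₀ _ this]
  | succ n ih => rw [lastStepCorrelation_succ hp hpv hv, ih]; field_simp; ring

lemma secondMoment_eq (n : ℕ) :
    secondMoment p v n = Fintype.card ι *
      ((1 + ρ) / (1 - ρ) * (n + 1) - 2 * ρ * (1 - ρ ^ (n + 1)) / (1 - ρ) ^ 2) := by
  have : 1 - ρ ≠ 0 := sub_ne_zero.mpr hρ.symm
  induction n with
  | zero => rw [secondMoment_zero hv]; field_simp; ring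
  | succ n ih =>
    rw [secondMoment_succ hp hpv hv, ih, lastStepCorrelation_eq hp hpv hv hρ]
    push_cast
    field_simp
    ring

end CorrelatedWalk

section Grover

variable {ι : Type*} [DecidableEq ι] (r t : ℂ)

def groverWeight (x y : ι) : ℝ := if x = y then ‖r‖ ^ 2 else ‖t‖ ^ 2

lemma norm_Xi_sq {m n : ℕ} (a : Fin (n + 1) → Fin m) :
    ‖Xi m (n + 1) r t a‖ ^ 2 = pathWeight (groverWeight r t) a := by
  rw [Xi, Fin.prod_univ_castSucc, dif_neg (by simp), mul_one, norm_prod, ← prod_pow]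
  refine prod_congr rfl fun j _ => ?_
  rw [dif_pos (by simp), groverWeight]
  split_ifs <;> simp_all [Fin.succ]

lemma groverWeight_eq (x y : ι) :
    groverWeight r t x y = ‖t‖ ^ 2 + (‖r‖ ^ 2 - ‖t‖ ^ 2) * if x = y then 1 else 0 := by
  rw [groverWeight]; split_ifs <;> ring

variable [Fintype ι]

lemma sum_groverWeight (x : ι) :
    ∑ y, groverWeight r t x y = ‖r‖ ^ 2 + (Fintype.card ι - 1) * ‖t‖ ^ 2 := by
  simp [groverWeight_eq, sum_add_distrib]
  ring

lemma sum_groverWeight_smul {E : Type*} [AddCommGroup E] [Module ℝ E] {v : ι → E}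
    (hv : ∑ y, v y = 0) (x : ι) :
    ∑ y, groverWeight r t x y • v y = (‖r‖ ^ 2 - ‖t‖ ^ 2) • v x := by
  simp [groverWeight_eq, add_smul, sum_add_distrib, ← smul_sum, hv]

end Grover

section SignedBasis

variable {d : ℕ}

lemma norm_eR (b : Fin (2 * d)) : ‖eR d b‖ = 1 := by
  unfold eR; split_ifs <;> simp

def partnerIndex (b : Fin (2 * d)) : Fin (2 * d) :=
  ⟨if (b : ℕ) % 2 = 0 then b + 1 else b - 1, by have := b.2; split_ifs <;> omega⟩

lemma partnerIndex_involutive : Function.Involutive (partnerIndex (d := d)) := by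
  intro b; ext; simp only [partnerIndex]; split_ifs <;> omega

lemma eR_partnerIndex (b : Fin (2 * d)) : eR d (partnerIndex b) = -eR d b := by
  ext i
  simp only [eR, partnerIndex, PiLp.neg_apply, PiLp.single_apply, Fin.ext_iff]
  split_ifs <;> first | (exfalso; omega) | norm_num

lemma sum_eR : ∑ b, eR d b = 0 := by
  have h := Equiv.sum_comp (partnerIndex_involutive.toPerm _) (eR d)
  simp only [Function.Involutive.coe_toPerm, eR_partnerIndex, sum_neg_distrib] at h
  linear_combination (norm := module) (-(1 / 2 : ℝ)) • h

end SignedBasis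

lemma norm_add_mul_sq_eq_one {m : ℕ} {r t : ℂ}
    (h1 : ‖r‖ ^ 2 + ((m : ℝ) - 1) * ‖t‖ ^ 2 = 1)
    (h2 : ((m : ℂ) - 2) * ((‖t‖ ^ 2 : ℝ) : ℂ) + conj r * t + r * conj t = 0) :
    ‖r + ((m : ℂ) - 1) * t‖ ^ 2 = 1 := by
  have h1' := congrArg ((↑) : ℝ → ℂ) h1
  apply Complex.ofReal_injective
  push_cast [← Complex.mul_conj', map_add, map_mul, map_sub, map_one, Complex.conj_natCast] at h1' h2 ⊢
  linear_combination h1' + ((m : ℂ) - 1) * h2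

lemma K_eq {d : ℕ} (hd : 0 < d) (r t : ℂ) :
    K d r t = ‖r + (((2 * d : ℕ) : ℂ) - 1) * t‖ ^ 2 / (2 * d) := by
  have hs : Real.sqrt (2 * d) ^ 2 = 2 * d := Real.sq_sqrt (by positivity)
  have hs0 : (Real.sqrt (2 * d) : ℂ) ≠ 0 := by
    exact_mod_cast (Real.sqrt_pos.mpr (by positivity : (0 : ℝ) < 2 * d)).ne'
  have hsC : (Real.sqrt (2 * d) : ℂ) ^ 2 = 2 * d := by exact_mod_cast hs
  have hsum : (r - t) / (Real.sqrt (2 * d) : ℂ) + (Real.sqrt (2 * d) : ℂ) * t =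
      (r + (((2 * d : ℕ) : ℂ) - 1) * t) / (Real.sqrt (2 * d) : ℂ) := by
    field_simp
    push_cast
    linear_combination t * hsC
  rw [K, hsum, norm_div, div_pow, Complex.norm_real, Real.norm_eq_abs, sq_abs, hs]

lemma norm_sq_sub_norm_sq_lt_one {m : ℕ} (hm : 0 < m) {r t : ℂ} (ht : t ≠ 0)
    (h1 : ‖r‖ ^ 2 + ((m : ℝ) - 1) * ‖t‖ ^ 2 = 1) : ‖r‖ ^ 2 - ‖t‖ ^ 2 < 1 := by
  have : 0 < (m : ℝ) * ‖t‖ ^ 2 := by positivity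
  linarith

lemma Dsp_succ_eq {d : ℕ} (hd : 0 < d) {r t : ℂ} (ht : t ≠ 0)
    (h1 : ‖r‖ ^ 2 + (((2 * d : ℕ) : ℝ) - 1) * ‖t‖ ^ 2 = 1)
    (h2 : (((2 * d : ℕ) : ℂ) - 2) * ((‖t‖ ^ 2 : ℝ) : ℂ) + conj r * t + r * conj t = 0)
    (n : ℕ) :
    let ρ := ‖r‖ ^ 2 - ‖t‖ ^ 2
    Dsp d r t (n + 1) = (1 + ρ) / (1 - ρ) * (n + 1) - 2 * ρ * (1 - ρ ^ (n + 1)) / (1 - ρ) ^ 2 := by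
  have hp (x : Fin (2 * d)) : ∑ y, groverWeight r t x y = 1 := by
    rw [sum_groverWeight, Fintype.card_fin, h1]
  have hM := secondMoment_eq hp (sum_groverWeight_smul r t sum_eR) norm_eR
    (norm_sq_sub_norm_sq_lt_one (by omega) ht h1).ne n
  rw [secondMoment, Fintype.card_fin, Nat.cast_mul, Nat.cast_ofNat] at hM
  simp only [Dsp, K_eq hd, norm_add_mul_sq_eq_one h1 h2, norm_Xi_sq, mul_comm (‖_‖ ^ 2), hM]
  field_simp

lemma closedForm_sub_linear {ρ : ℝ} (hρ : ρ ≠ 1) (n : ℕ) :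
    (1 + ρ) / (1 - ρ) * (n + 1) - 2 * ρ * (1 - ρ ^ (n + 1)) / (1 - ρ) ^ 2
      - (1 + ρ) / (1 - ρ) * (n + 1) - (-(2 * ρ) / (1 - ρ) ^ 2)
      = 2 * ρ / (1 - ρ) ^ 2 * ρ ^ (n + 1) := by
  have : 1 - ρ ≠ 0 := sub_ne_zero.mpr hρ.symm
  field_simp
  ring

/-- Theorem 1 / Eq. (63) of the paper: for a unitary generalized Grover coin with
`t ≠ 0` and `ρ = |r|² - |t|²`, the dispersion of the quantum walk with random phase
shifts grows linearly with slope `(1+ρ)/(1-ρ)` up to an exponentially small correction: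
`|𝒟(n) - ((1+ρ)/(1-ρ)) n - c| ≤ C |ρ|^n` for some constants `c` and `C ≥ 0`. -/
theorem dispersion_linear_growth (d : ℕ) (hd : 2 ≤ d) (r t : ℂ) (ht : t ≠ 0)
    (h1 : ‖r‖ ^ 2 + (((2 * d : ℕ) : ℝ) - 1) * ‖t‖ ^ 2 = 1)
    (h2 : (((2 * d : ℕ) : ℂ) - 2) * ((‖t‖ ^ 2 : ℝ) : ℂ) + conj r * t + r * conj t = 0) :
    ∃ c C : ℝ, 0 ≤ C ∧ ∀ n : ℕ, 1 ≤ n →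
      |Dsp d r t n -
          ((1 + (‖r‖ ^ 2 - ‖t‖ ^ 2)) / (1 - (‖r‖ ^ 2 - ‖t‖ ^ 2))) * n - c|
        ≤ C * |‖r‖ ^ 2 - ‖t‖ ^ 2| ^ n := by
  set ρ := ‖r‖ ^ 2 - ‖t‖ ^ 2
  have hρ : ρ ≠ 1 := (norm_sq_sub_norm_sq_lt_one (by omega) ht h1).ne
  refine ⟨-(2 * ρ) / (1 - ρ) ^ 2, 2 * |ρ| / (1 - ρ) ^ 2, by positivity, ?_⟩
  rintro (_ | n) hn
  · omega
  rw [Dsp_succ_eq (by omega) ht h1 h2, Nat.cast_succ, closedForm_sub_linear hρ, abs_mul,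
    abs_div, abs_mul, abs_pow, abs_pow, abs_two, sq_abs]
end
end
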